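/- Linearization of the matrix equation (3.44): let α, β, γ, c be complex scalars with c ≠ 0, and let V : ℝ → (k×k complex matrices) be three times differentiable with V(t) invertible for all t, satisfying the linear ODE V⃛ = c α V + β V̇ + γ V̈. Then the matrix U(t) := c⁻¹ V(t)⁻¹ V̇(t) satisfies Ü = α·1 + β U + γ ( U̇ + c U² ) − c ( U̇ U + 2 U U̇ + c U³ ), where 1 denotes the identity matrix. -/

import Mathlib

/-!
With `U = c⁻¹ V⁻¹ V̇` we have `V̇ = c V U`. Differentiating twice gives
`V̈ = c (V̇ U + V U̇)` and `V⃛ = c (V̈ U + 2 V̇ U̇ + V Ü)`, so both `V̈` and `V⃛` are `c V` times a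
polynomial in `U` and `U̇`. Substituting these into the linear equation for `V⃛` and cancelling
the invertible factor `c V` leaves the equation for `Ü`. Differentiability of `U` and `U̇` comes
from `U = V⁻¹ · (c⁻¹ V̇)` and `U̇ = V⁻¹ · (c⁻¹ V̈ - V̇ U)`.
-/

open Matrix

attribute [local instance] Matrix.normedAddCommGroup Matrix.normedSpace

noncomputable section

open Filter Topology

section MatrixCalculus

variable {𝕜 R : Type*} [NontriviallyNormedField 𝕜] {m n p : Type*} {x : 𝕜}

theorem hasDerivAt_matrix [Fintype n] [NormedAddCommGroup R] [NormedSpace 𝕜 R]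
    {A : 𝕜 → Matrix m n R} {A' : Matrix m n R} :
    HasDerivAt A A' x ↔ ∀ i j, HasDerivAt (fun y => A y i j) (A' i j) x :=
  hasDerivAt_pi.trans (forall_congr' fun _ => hasDerivAt_pi)

theorem HasDerivAt.matrix_mul [Fintype n] [Fintype p] [NormedRing R] [NormedAlgebra 𝕜 R]
    {A : 𝕜 → Matrix m n R} {B : 𝕜 → Matrix n p R} {A' : Matrix m n R} {B' : Matrix n p R}
    (hA : HasDerivAt A A' x) (hB : HasDerivAt B B' x) :
    HasDerivAt (fun y => A y * B y) (A' * B x + A x * B') x := by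
  refine hasDerivAt_matrix.2 fun i j => ?_
  simp only [Matrix.mul_apply, Matrix.add_apply, ← Finset.sum_add_distrib]
  exact HasDerivAt.fun_sum fun l _ =>
    (hasDerivAt_matrix.1 hA i l).mul (hasDerivAt_matrix.1 hB l j)

variable [Fintype n] [DecidableEq n] [NormedField R] [NormedAlgebra 𝕜 R]

theorem HasDerivAt.matrix_inv {A : 𝕜 → Matrix n n R} {A' : Matrix n n R}
    (hA : HasDerivAt A A' x) (hx : IsUnit (A x)) :
    HasDerivAt (fun y => (A y)⁻¹) (-((A x)⁻¹ * A' * (A x)⁻¹)) x := by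
  have hdet : (A x).det ≠ 0 := ((Matrix.isUnit_iff_isUnit_det _).1 hx).ne_zero
  have hcont : ContinuousAt (fun y => (A y)⁻¹) x := by
    refine (continuousAt_matrix_inv _ ?_).comp hA.continuousAt
    simpa only [Ring.inverse_eq_inv'] using continuousAt_inv₀ hdet
  have hunit : ∀ᶠ y in 𝓝 x, IsUnit (A y) := by
    simp only [Matrix.isUnit_iff_isUnit_det, isUnit_iff_ne_zero]
    exact (continuous_id.matrix_det.continuousAt.comp hA.continuousAt).eventually_ne hdet
  refine hasDerivAt_iff_tendsto_slope.2 ?_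
  -- the slope of `A⁻¹` is `-(A y)⁻¹ * slope A x y * (A x)⁻¹`, by `B⁻¹ - C⁻¹ = -B⁻¹ (B - C) C⁻¹`
  have key : Tendsto (fun y => -((A y)⁻¹ * slope A x y * (A x)⁻¹)) (𝓝[≠] x)
      (𝓝 (-((A x)⁻¹ * A' * (A x)⁻¹))) :=
    (((hcont.mono_left nhdsWithin_le_nhds).mul hA.tendsto_slope).mul tendsto_const_nhds).neg
  refine key.congr' ?_
  filter_upwards [nhdsWithin_le_nhds hunit] with y hy
  rw [Matrix.isUnit_iff_isUnit_det] at hx hy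
  simp only [slope_def_module, mul_smul_comm, smul_mul_assoc, mul_sub, sub_mul,
    Matrix.nonsing_inv_mul _ hy, Matrix.mul_nonsing_inv_cancel_right _ _ hx, one_mul, neg_sub,
    smul_sub]

theorem differentiableAt_of_matrix_mul_eq {A P Q : 𝕜 → Matrix n n R}
    (hA : DifferentiableAt 𝕜 A x) (hQ : DifferentiableAt 𝕜 Q x) (hunit : ∀ y, IsUnit (A y))
    (h : ∀ y, A y * P y = Q y) : DifferentiableAt 𝕜 P x := by
  have hP : P = fun y => (A y)⁻¹ * Q y := funext fun y => by
    rw [← h, Matrix.nonsing_inv_mul_cancel_left _ _ ((Matrix.isUnit_iff_isUnit_det _).1 (hunit y))]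
  rw [hP]
  exact ((hA.hasDerivAt.matrix_inv (hunit x)).matrix_mul hQ.hasDerivAt).differentiableAt

end MatrixCalculus

theorem riccati_of_linear_third_order {K A : Type*} [Field K] [Ring A] [Algebra K A]
    {α β γ c : K} (hc : c ≠ 0) {V V₁ V₂ V₃ U U₁ U₂ : A} (hV : IsUnit V)
    (h₁ : V₁ = c • (V * U)) (h₂ : V₂ = c • (V₁ * U + V * U₁))
    (h₃ : V₃ = c • (V₂ * U + V₁ * U₁ + (V₁ * U₁ + V * U₂)))
    (hODE : V₃ = (c * α) • V + β • V₁ + γ • V₂) :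
    U₂ = α • 1 + β • U + γ • (U₁ + c • (U * U))
      - c • (U₁ * U + (2 : K) • (U * U₁) + c • (U * U * U)) := by
  have hVU₂ : c • (V * U₂) = V₃ - c • (V₂ * U + V₁ * U₁ + V₁ * U₁) := by
    rw [h₃]
    simp only [smul_add]
    abel
  refine hV.mul_left_cancel (smul_right_injective A hc ?_)
  dsimp only
  rw [hVU₂, hODE, h₂, h₁]
  simp only [mul_add, mul_sub, add_mul, mul_smul_comm, smul_mul_assoc, smul_add, smul_sub,
    smul_smul, mul_assoc, mul_one]
  match_scalars <;> ring

theorem linearization_of_eq_344 (k : ℕ) (α β γ c : ℂ) (hc : c ≠ 0)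
    (V V' V'' V''' : ℝ → Matrix (Fin k) (Fin k) ℂ)
    (hVinv : ∀ t, IsUnit (V t))
    (hV : ∀ t, HasDerivAt V (V' t) t)
    (hV' : ∀ t, HasDerivAt V' (V'' t) t)
    (hV'' : ∀ t, HasDerivAt V'' (V''' t) t)
    (hODE : ∀ t, V''' t = (c * α) • V t + β • V' t + γ • V'' t)
    (U : ℝ → Matrix (Fin k) (Fin k) ℂ)
    (hU : ∀ t, U t = c⁻¹ • ((V t)⁻¹ * V' t)) :
    (∀ t, DifferentiableAt ℝ U t) ∧
    ∀ t, HasDerivAt (deriv U)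
      (α • (1 : Matrix (Fin k) (Fin k) ℂ) + β • U t + γ • (deriv U t + c • (U t * U t))
        - c • (deriv U t * U t + (2 : ℂ) • (U t * deriv U t) + c • (U t * U t * U t))) t := by
  have hVU (t : ℝ) : V t * U t = c⁻¹ • V' t := by
    rw [hU, mul_smul_comm,
      Matrix.mul_nonsing_inv_cancel_left _ _ ((Matrix.isUnit_iff_isUnit_det _).1 (hVinv t))]
  have hU_diff (t : ℝ) : DifferentiableAt ℝ U t :=
    differentiableAt_of_matrix_mul_eq (hV t).differentiableAt
      ((hV' t).differentiableAt.const_smul c⁻¹) hVinv hVU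
  have hV'_eq (t : ℝ) : V' t = c • (V t * U t) := by
    rw [hVU, smul_inv_smul₀ hc]
  have hV''_eq (t : ℝ) : V'' t = c • (V' t * U t + V t * deriv U t) :=
    (hV' t).unique ((((hV t).matrix_mul (hU_diff t).hasDerivAt).const_smul c).congr_of_eventuallyEq
      (.of_forall hV'_eq))
  have hU'_diff (t : ℝ) : DifferentiableAt ℝ (deriv U) t := by
    refine differentiableAt_of_matrix_mul_eq (Q := fun s => c⁻¹ • V'' s - V' s * U s)
      (hV t).differentiableAt ?_ hVinv fun s => ?_
    · exact (((hV'' t).const_smul c⁻¹).sub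
        ((hV' t).matrix_mul (hU_diff t).hasDerivAt)).differentiableAt
    · rw [hV''_eq, inv_smul_smul₀ hc, add_sub_cancel_left]
  have hV'''_eq (t : ℝ) : V''' t =
      c • (V'' t * U t + V' t * deriv U t + (V' t * deriv U t + V t * deriv (deriv U) t)) :=
    (hV'' t).unique (((((hV' t).matrix_mul (hU_diff t).hasDerivAt).add
      ((hV t).matrix_mul (hU'_diff t).hasDerivAt)).const_smul c).congr_of_eventuallyEq
        (.of_forall hV''_eq))
  refine ⟨hU_diff, fun t => ?_⟩
  rw [← riccati_of_linear_third_order hc (hVinv t) (hV'_eq t) (hV''_eq t) (hV'''_eq t) (hODE t)]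
  exact (hU'_diff t).hasDerivAt
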